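/- arXiv:1305.1591 — 4 statements merged into one kernel-verified Lean document; each statement's English description precedes it below -/
import Mathlib

section
/- Let X : ℕ → ℝ be a bounded function and let x be a real number with |x| < 1. Then the series ∑_{n=1}^∞ X(n)·log(1 − xⁿ) converges absolutely and ∑_{n=1}^∞ X(n)·log(1 − xⁿ) = −∑_{n=1}^∞ (xⁿ/n)·(∑_{d | n} d·X(d)), where the inner sum runs over the positive divisors d of n. -/
/-!
Expanding `-log (1 - xⁿ) = ∑_{m ≥ 1} x^{nm} / m` turns the left-hand side into minus the double
series `∑_{n, m ≥ 1} X n · x^{nm} / m`, which converges absolutely because its terms are dominated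
by `C |x|^{nm}`. Summing it instead along the hyperbolas `n m = k` gives
`∑_{nm = k} X n · x^k / m = (x^k / k) ∑_{d ∣ k} d · X d`.
-/

open Finset

theorem HasSum.sum_divisorsAntidiagonal {α : Type*} [AddCommMonoid α] [TopologicalSpace α]
    [ContinuousAdd α] [RegularSpace α] {f : ℕ → ℕ → α} {a : α}
    (h : HasSum (fun p : ℕ+ × ℕ+ => f p.1 p.2) a) :
    HasSum (fun n : ℕ+ => ∑ p ∈ (n : ℕ).divisorsAntidiagonal, f p.1 p.2) a := by
  refine (sigmaAntidiagonalEquivProd.hasSum_iff.mpr h).sigma fun n => ?_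
  rw [← Finset.sum_attach]
  exact hasSum_fintype _

theorem Real.hasSum_pnat_pow_div_eq_neg_log {y : ℝ} (hy : |y| < 1) :
    HasSum (fun m : ℕ+ => y ^ (m : ℕ) / m) (-Real.log (1 - y)) := by
  rw [hasSum_pnat_iff_hasSum_succ (f := fun m => y ^ m / m)]
  exact_mod_cast Real.hasSum_pow_div_log_of_abs_lt_one hy

theorem sum_divisorsAntidiagonal_mul_pow_div {K : Type*} [Field K] [CharZero K]
    (X : ℕ → K) (x : K) (n : ℕ) :
    ∑ p ∈ n.divisorsAntidiagonal, X p.1 * (x ^ (p.1 * p.2) / p.2) =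
      x ^ n / n * ∑ d ∈ n.divisors, (d : K) * X d := by
  rw [Nat.sum_divisorsAntidiagonal (fun i j => X i * (x ^ (i * j) / j)), Finset.mul_sum]
  refine Finset.sum_congr rfl fun d hd => ?_
  have hdn : d ∣ n := Nat.dvd_of_mem_divisors hd
  have hd0 : (d : K) ≠ 0 := Nat.cast_ne_zero.mpr (Nat.ne_of_gt (Nat.pos_of_mem_divisors hd))
  rw [Nat.mul_div_cancel' hdn, Nat.cast_div hdn hd0]
  field_simp

theorem summable_abs_mul_pow_mul_div {X : ℕ → ℝ} {C : ℝ} (hC : ∀ n, |X n| ≤ C) {x : ℝ}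
    (hx : |x| < 1) :
    Summable fun p : ℕ+ × ℕ+ => |X p.1 * (x ^ (p.1 * p.2 : ℕ) / p.2)| := by
  have hgeom : Summable fun p : ℕ+ × ℕ+ => |x| ^ (p.1 * p.2 : ℕ) := by
    simpa using summable_prod_mul_pow 0 (r := |x|) (by simpa using hx)
  refine .of_nonneg_of_le (fun _ => abs_nonneg _) (fun p => ?_) (hgeom.mul_left C)
  rw [abs_mul, abs_div, abs_pow, Nat.abs_cast]
  gcongr
  · exact (abs_nonneg _).trans (hC 0)
  · exact hC _
  · exact div_le_self (by positivity) (Nat.one_le_cast.mpr p.2.pos)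

/-- For a bounded `X : ℕ → ℝ` and `|x| < 1`, the series
`∑_{n ≥ 1} X n * log (1 - x^n)` converges absolutely, and equals
`-∑_{n ≥ 1} (x^n / n) * ∑_{d ∣ n} d * X d`. -/
theorem stmt0 (X : ℕ → ℝ) (hX : ∃ C : ℝ, ∀ n : ℕ, |X n| ≤ C)
    (x : ℝ) (hx : |x| < 1) :
    Summable (fun n : ℕ => |X (n + 1) * Real.log (1 - x ^ (n + 1))|) ∧
    ∑' n : ℕ, X (n + 1) * Real.log (1 - x ^ (n + 1)) =
      - ∑' n : ℕ, (x ^ (n + 1) / (n + 1 : ℝ)) *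
        ∑ d ∈ (n + 1).divisors, (d : ℝ) * X d := by
  obtain ⟨C, hC⟩ := hX
  set T : ℕ → ℕ → ℝ := fun n m => X n * (x ^ (n * m) / m)
  have hT : Summable fun p : ℕ+ × ℕ+ => |T p.1 p.2| := summable_abs_mul_pow_mul_div hC hx
  have hrow (n : ℕ+) : HasSum (fun m : ℕ+ => T n m) (-(X n * Real.log (1 - x ^ (n : ℕ)))) := by
    have hxn : |x ^ (n : ℕ)| < 1 := by
      rw [abs_pow]; exact pow_lt_one₀ (abs_nonneg x) hx n.ne_zero
    simpa [T, pow_mul] using (Real.hasSum_pnat_pow_div_eq_neg_log hxn).mul_left (X n)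
  have hprod := hT.of_abs.hasSum
  set S := ∑' p : ℕ+ × ℕ+, T p.1 p.2
  have hlog : HasSum (fun n : ℕ+ => X n * Real.log (1 - x ^ (n : ℕ))) (-S) := by
    simpa only [neg_neg] using (hprod.prod_fiberwise hrow).neg
  have hdiv : HasSum (fun n : ℕ+ => x ^ (n : ℕ) / (n : ℕ) *
      ∑ d ∈ (n : ℕ).divisors, (d : ℝ) * X d) S := by
    simpa only [T, sum_divisorsAntidiagonal_mul_pow_div] using hprod.sum_divisorsAntidiagonal
  have habs : Summable fun n : ℕ+ => |X n * Real.log (1 - x ^ (n : ℕ))| := by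
    refine hT.prod.of_nonneg_of_le (fun _ => abs_nonneg _) fun n => ?_
    rw [← abs_neg, ← (hrow n).tsum_eq]
    simpa only [Real.norm_eq_abs] using norm_tsum_le_tsum_norm (f := fun m : ℕ+ => T n m)
      (by simpa only [Real.norm_eq_abs] using hT.prod_factor n)
  rw [hasSum_pnat_iff_hasSum_succ (f := fun n => X n * Real.log (1 - x ^ n))] at hlog
  rw [hasSum_pnat_iff_hasSum_succ
    (f := fun n => x ^ n / n * ∑ d ∈ n.divisors, (d : ℝ) * X d)] at hdiv
  push_cast at hdiv
  exact ⟨summable_pnat_iff_summable_succ (f := fun n => |X n * Real.log (1 - x ^ n)|) |>.mp habs,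
    by rw [hlog.tsum_eq, hdiv.tsum_eq]⟩
end

section
/- Let T be an odd positive integer and let X : ℕ → ℝ be T-periodic (X(n+T) = X(n) for all n ≥ 1) and catoptric in each period, i.e. X(T) = 0 and X(T − j) = X(j) for 1 ≤ j ≤ T − 1. Then for every real x with 0 < x < 1, ∏_{n=1}^∞ (1 − xⁿ)^{X(n)} = ∏_{j=1}^{(T−1)/2} ( ∏_{n=0}^∞ (1 − x^{Tn+j})(1 − x^{Tn+T−j}) )^{X(j)}, where all powers are real powers of positive reals. -/
/-!
Take logarithms: the left side is `exp (∑ₙ X n · log (1 - xⁿ))`. Splitting this absolutely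
convergent sum by residue classes `j` mod `T` and using periodicity to pull `X j` out of each
class gives `∑_{j=1}^{T} X j · Sⱼ` with `Sⱼ = ∑_q log (1 - x^{Tq+j})`. The class `j = T` drops out
because `X T = 0`, and since `T` is odd the remaining classes pair off as `j ↔ T - j` with equal
weights, each pair contributing `X j · (Sⱼ + S_{T-j}) = X j · log [j, T; x]`.
-/

open Real Finset

lemma summable_log_one_sub_pow {x : ℝ} (hx0 : 0 ≤ x) (hx1 : x < 1) :
    Summable fun n : ℕ => log (1 - x ^ n) := by
  simpa [sub_eq_add_neg] using
    Real.summable_log_one_add_of_summable (summable_geometric_of_lt_one hx0 hx1).neg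

lemma summable_log_one_sub_pow_mul_add {x : ℝ} (hx0 : 0 ≤ x) (hx1 : x < 1) {T : ℕ} (hT : 0 < T)
    (j : ℕ) : Summable fun n : ℕ => log (1 - x ^ (T * n + j)) :=
  (summable_log_one_sub_pow hx0 hx1).comp_injective
    ((add_left_injective j).comp (mul_right_injective₀ hT.ne'))

lemma Function.Periodic.norm_le_sum_range {E : Type*} [SeminormedAddCommGroup E] {a : ℕ → E}
    {T : ℕ} (ha : Function.Periodic a T) (hT : 0 < T) (n : ℕ) :
    ‖a n‖ ≤ ∑ j ∈ range T, ‖a j‖ := by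
  rw [← ha.map_mod_nat n]
  exact single_le_sum (fun j _ => norm_nonneg (a j)) (mem_range.2 (Nat.mod_lt n hT))

lemma Function.Periodic.summable_mul {a L : ℕ → ℝ} {T : ℕ} (ha : Function.Periodic a T)
    (hT : 0 < T) (hL : Summable L) : Summable fun n => a n * L n :=
  (hL.norm.mul_left (∑ j ∈ range T, ‖a j‖)).of_norm_bounded fun n => by
    rw [norm_mul]
    exact mul_le_mul_of_nonneg_right (ha.norm_le_sum_range hT n) (norm_nonneg _)

lemma tsum_eq_sum_range_tsum {R : Type*} [AddCommGroup R] [UniformSpace R] [IsUniformAddGroup R]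
    [CompleteSpace R] [T0Space R] {f : ℕ → R} (hf : Summable f) (T : ℕ) [NeZero T] :
    ∑' n, f n = ∑ j ∈ range T, ∑' q, f (T * q + j) := by
  obtain ⟨k, rfl⟩ : ∃ k, T = k + 1 := Nat.exists_eq_add_one.2 (Nat.pos_of_neZero T)
  rw [Nat.sumByResidueClasses hf (k + 1), ← Fin.sum_univ_eq_sum_range]
  simp only [add_comm ((k + 1) * _)]
  rfl

lemma Function.Periodic.tsum_mul_eq_sum_range {a L : ℕ → ℝ} {T : ℕ} (ha : Function.Periodic a T)
    [NeZero T] (hL : Summable L) :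
    ∑' n, a n * L n = ∑ j ∈ range T, a j * ∑' q, L (T * q + j) := by
  rw [tsum_eq_sum_range_tsum (T := T) (ha.summable_mul (Nat.pos_of_neZero T) hL)]
  refine sum_congr rfl fun j _ => ?_
  have h (q : ℕ) : a (T * q + j) = a j := by rw [add_comm, mul_comm]; exact ha.nat_mul q j
  simp only [h, tsum_mul_left]

lemma tprod_rpow_eq_exp_tsum {ι : Type*} {f a : ι → ℝ} (hf : ∀ i, 0 < f i)
    (hs : Summable fun i => a i * log (f i)) :
    ∏' i, f i ^ a i = exp (∑' i, a i * log (f i)) := by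
  have hlog (i : ι) : log (f i ^ a i) = a i * log (f i) := log_rpow (hf i) _
  rw [← rexp_tsum_eq_tprod (fun i => rpow_pos_of_pos (hf i) _) (by simpa only [hlog] using hs)]
  simp only [hlog]

lemma one_sub_pow_pos {x : ℝ} (hx0 : 0 ≤ x) (hx1 : x < 1) {n : ℕ} (hn : n ≠ 0) :
    0 < 1 - x ^ n :=
  sub_pos.2 (pow_lt_one₀ hx0 hx1 hn)

lemma tprod_one_sub_pow_mul_one_sub_pow_eq_exp {x : ℝ} (hx0 : 0 ≤ x) (hx1 : x < 1) {T j : ℕ}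
    (hj : 0 < j) (hjT : j < T) :
    ∏' n : ℕ, (1 - x ^ (T * n + j)) * (1 - x ^ (T * n + T - j)) =
      exp (∑' n : ℕ, log (1 - x ^ (T * n + j)) + ∑' n : ℕ, log (1 - x ^ (T * n + (T - j)))) := by
  have hT : 0 < T := hj.trans hjT
  have hTj : 0 < T - j := Nat.sub_pos_of_lt hjT
  have hpos (n i : ℕ) (hi : 0 < i) : 0 < 1 - x ^ (T * n + i) := one_sub_pow_pos hx0 hx1 (by omega)
  have hlog (n : ℕ) : log ((1 - x ^ (T * n + j)) * (1 - x ^ (T * n + (T - j)))) =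
      log (1 - x ^ (T * n + j)) + log (1 - x ^ (T * n + (T - j))) :=
    log_mul (hpos n j hj).ne' (hpos n (T - j) hTj).ne'
  have h₁ := summable_log_one_sub_pow_mul_add hx0 hx1 hT j
  have h₂ := summable_log_one_sub_pow_mul_add hx0 hx1 hT (T - j)
  have hsplit (n : ℕ) : T * n + T - j = T * n + (T - j) := by omega
  simp only [hsplit]
  rw [← rexp_tsum_eq_tprod (fun n => mul_pos (hpos n j hj) (hpos n (T - j) hTj))
    (by simpa only [hlog] using h₁.add h₂), ← h₁.tsum_add h₂]
  simp only [hlog]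

lemma sum_range_two_mul_add_one_eq_sum_Icc_add_reflect {M : Type*} [AddCommMonoid M]
    (g : ℕ → M) (m : ℕ) (hg : g (2 * m + 1) = 0) :
    ∑ j ∈ range (2 * m + 1), g (j + 1) = ∑ j ∈ Icc 1 m, (g j + g (2 * m + 1 - j)) := by
  rw [sum_range_succ, hg, add_zero, two_mul, sum_range_add,
    ← sum_range_reflect (fun j => g (m + j + 1)) m, ← sum_add_distrib,
    ← Ico_add_one_right_eq_Icc, sum_Ico_eq_sum_range]
  refine sum_congr rfl fun j hj => ?_
  have hj := mem_range.1 hj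
  congr 2 <;> omega

theorem stmt3_general (T : ℕ) (hTodd : Odd T) (X : ℕ → ℝ)
    (hper : ∀ n : ℕ, 1 ≤ n → X (n + T) = X n)
    (hXT : X T = 0)
    (hcat : ∀ j : ℕ, 1 ≤ j → j ≤ T - 1 → X (T - j) = X j)
    (x : ℝ) (hx0 : 0 < x) (hx1 : x < 1) :
    ∏' n : ℕ, (1 - x ^ (n + 1)) ^ (X (n + 1)) =
      ∏ j ∈ Finset.Icc 1 ((T - 1) / 2),
        (∏' n : ℕ, (1 - x ^ (T * n + j)) * (1 - x ^ (T * n + T - j))) ^ (X j) := by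
  obtain ⟨m, rfl⟩ := hTodd
  have hm : (2 * m + 1 - 1) / 2 = m := by omega
  have hXper : Function.Periodic (fun n => X (n + 1)) (2 * m + 1) := fun n => by
    simpa only [add_right_comm] using hper (n + 1) n.succ_pos
  have hlog : Summable fun n : ℕ => log (1 - x ^ (n + 1)) :=
    (summable_nat_add_iff 1).2 (summable_log_one_sub_pow hx0.le hx1)
  set S : ℕ → ℝ := fun j => ∑' q : ℕ, log (1 - x ^ ((2 * m + 1) * q + j))
  have hLHS : ∏' n : ℕ, (1 - x ^ (n + 1)) ^ (X (n + 1)) =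
      exp (∑ j ∈ range (2 * m + 1), X (j + 1) * S (j + 1)) := by
    rw [tprod_rpow_eq_exp_tsum (fun n => one_sub_pow_pos hx0.le hx1 n.succ_ne_zero)
      (hXper.summable_mul (by omega) hlog), hXper.tsum_mul_eq_sum_range hlog]
    rfl
  have hRHS : ∏ j ∈ Icc 1 m,
      (∏' n : ℕ, (1 - x ^ ((2 * m + 1) * n + j)) *
        (1 - x ^ ((2 * m + 1) * n + (2 * m + 1) - j))) ^ (X j) =
      exp (∑ j ∈ Icc 1 m, X j * (S j + S (2 * m + 1 - j))) := by
    rw [exp_sum]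
    refine prod_congr rfl fun j hj => ?_
    have hj := mem_Icc.1 hj
    rw [tprod_one_sub_pow_mul_one_sub_pow_eq_exp hx0.le hx1 (by omega) (by omega), ← exp_mul,
      mul_comm]
  rw [hm, hLHS, hRHS, sum_range_two_mul_add_one_eq_sum_Icc_add_reflect (fun j => X j * S j) m
    (by simp only [hXT, zero_mul])]
  refine congrArg exp (sum_congr rfl fun j hj => ?_)
  have hj := mem_Icc.1 hj
  rw [hcat j hj.1 (by omega), mul_add]

/-- Let `T` be an odd positive integer and `X : ℕ → ℝ` be
`T`-periodic and catoptric in each period (`X T = 0`, `X (T - j) = X j` for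
`1 ≤ j ≤ T - 1`).  Then for `0 < x < 1`,
`∏_{n ≥ 1} (1 - x^n) ^ (X n) = ∏_{j=1}^{(T-1)/2} [j, T; x] ^ (X j)`, where
`[a, p; x] = ∏_{n ≥ 0} (1 - x^{pn+a}) (1 - x^{pn+p-a})`. -/
theorem stmt3 (T : ℕ) (hTpos : 0 < T) (hTodd : Odd T) (X : ℕ → ℝ)
    (hper : ∀ n : ℕ, 1 ≤ n → X (n + T) = X n)
    (hXT : X T = 0)
    (hcat : ∀ j : ℕ, 1 ≤ j → j ≤ T - 1 → X (T - j) = X j)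
    (x : ℝ) (hx0 : 0 < x) (hx1 : x < 1) :
    ∏' n : ℕ, (1 - x ^ (n + 1)) ^ (X (n + 1)) =
      ∏ j ∈ Finset.Icc 1 ((T - 1) / 2),
        (∏' n : ℕ, (1 - x ^ (T * n + j)) * (1 - x ^ (T * n + T - j))) ^ (X j) :=
  stmt3_general T hTodd X hper hXT hcat x hx0 hx1
end

section
/- Let a and p be real numbers with 0 < a < p and let q be real with 0 < q < 1. Then ( ∏_{n=0}^∞ (1 − q^{pn+a})(1 − q^{pn+p−a}) ) · ( ∏_{n=1}^∞ (1 − q^{pn}) ) = ∑_{n=−∞}^∞ (−1)ⁿ q^{(p n² + (p − 2a) n)/2}, where q raised to real exponents is the real power and the bilateral series converges absolutely. -/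
/-!
Cauchy's `q`-binomial theorem `∏_{j<m} (1 + t u^j) = ∑_k u^(k choose 2) [m, k]_u t^k`, taken
with `m = 2N`, `u = Q²` and `t = -x Q^(1-2N)`, gives the finite triple product
`∏_{i<N} (1 - x Q^(2i+1)) (1 - x⁻¹ Q^(2i+1)) = ∑_{|n|≤N} [2N, N+n]_{Q²} (-1)^n Q^(n²) x^n`.
As `N → ∞`, `(Q²; Q²)_∞ · [2N, N+n]_{Q²}` tends to `1` and stays in `[0, 1]`, so Tannery's
theorem lets us pass to the limit in the series, which is Jacobi's triple product identity.
The theorem is its instance `Q = q^(p/2)`, `x = q^((p-2a)/2)`.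
-/

open Finset Filter Topology

section QBinomial

variable {R : Type*} [CommRing R]

def qBinom (u : R) : ℕ → ℕ → R
  | _, 0 => 1
  | 0, _ + 1 => 0
  | m + 1, k + 1 => u ^ (k + 1) * qBinom u m (k + 1) + qBinom u m k

@[simp]
lemma qBinom_zero_right (u : R) (m : ℕ) : qBinom u m 0 = 1 := by
  cases m <;> rfl

lemma qBinom_succ_succ (u : R) (m k : ℕ) :
    qBinom u (m + 1) (k + 1) = u ^ (k + 1) * qBinom u m (k + 1) + qBinom u m k :=
  rfl

lemma qBinom_eq_zero_of_lt (u : R) {m k : ℕ} (h : m < k) : qBinom u m k = 0 := by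
  induction m generalizing k with
  | zero => obtain ⟨k, rfl⟩ := Nat.exists_eq_add_one_of_ne_zero h.ne'; rfl
  | succ m ih =>
    obtain ⟨k, rfl⟩ := Nat.exists_eq_add_one_of_ne_zero (Nat.ne_zero_of_lt h)
    rw [qBinom_succ_succ, ih (by omega), ih (by omega), mul_zero, add_zero]

@[simp]
lemma qBinom_self (u : R) (m : ℕ) : qBinom u m m = 1 := by
  induction m with
  | zero => rfl
  | succ m ih =>
    rw [qBinom_succ_succ, qBinom_eq_zero_of_lt u m.lt_succ_self, ih, mul_zero, zero_add]

/-- `(u; u)_m` in `q`-Pochhammer notation. -/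
def qPochhammer (u : R) (m : ℕ) : R :=
  ∏ j ∈ range m, (1 - u ^ (j + 1))

lemma qPochhammer_succ (u : R) (m : ℕ) :
    qPochhammer u (m + 1) = qPochhammer u m * (1 - u ^ (m + 1)) :=
  prod_range_succ _ _

lemma qBinom_mul_qPochhammer_mul_qPochhammer (u : R) {m k : ℕ} (h : k ≤ m) :
    qBinom u m k * qPochhammer u k * qPochhammer u (m - k) = qPochhammer u m := by
  induction m generalizing k with
  | zero => obtain rfl := Nat.le_zero.1 h; simp [qPochhammer]
  | succ m ih =>
    rcases k with _ | k
    · simp [qPochhammer]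
    rcases (Nat.le_of_succ_le_succ h).eq_or_lt with rfl | hlt
    · simp [qPochhammer]
    obtain ⟨d, rfl⟩ := Nat.exists_eq_add_of_lt hlt
    have ih₁ := ih (k := k + 1) (by omega)
    have ih₀ := ih (k := k) (by omega)
    rw [show k + d + 1 - (k + 1) = d by omega, qPochhammer_succ u k] at ih₁
    rw [show k + d + 1 - k = d + 1 by omega, qPochhammer_succ] at ih₀
    rw [show k + d + 1 + 1 - (k + 1) = d + 1 by omega, qBinom_succ_succ, qPochhammer_succ u k,
      qPochhammer_succ u d, qPochhammer_succ u (k + d + 1)]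
    linear_combination (u ^ (k + 1) * (1 - u ^ (d + 1))) * ih₁ + (1 - u ^ (k + 1)) * ih₀

theorem prod_one_add_mul_pow_eq_sum_qBinom (u t : R) (m : ℕ) :
    ∏ j ∈ range m, (1 + t * u ^ j) =
      ∑ k ∈ range (m + 1), u ^ k.choose 2 * qBinom u m k * t ^ k := by
  induction m generalizing t with
  | zero => simp
  | succ m ih =>
    have hchoose (k : ℕ) : u ^ (k + 1).choose 2 = u ^ k.choose 2 * u ^ k := by
      rw [Nat.choose_succ_succ, Nat.choose_one_right, pow_add, mul_comm]
    set a : ℕ → R := fun k => u ^ k.choose 2 * qBinom u m k * (t * u) ^ k with ha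
    have hlow : ∑ k ∈ range (m + 1), a k =
        ∑ k ∈ range (m + 1),
          u ^ (k + 1).choose 2 * (u ^ (k + 1) * qBinom u m (k + 1)) * t ^ (k + 1) + 1 := by
      have hlast : a (m + 1) = 0 := by simp [ha, qBinom_eq_zero_of_lt u m.lt_succ_self]
      rw [← add_zero (∑ k ∈ range (m + 1), a k), ← hlast, ← sum_range_succ,
        sum_range_succ']
      congr 1
      · exact sum_congr rfl fun k _ => by rw [ha]; ring
      · simp [ha]
    have hhigh : t * ∑ k ∈ range (m + 1), a k =
        ∑ k ∈ range (m + 1), u ^ (k + 1).choose 2 * qBinom u m k * t ^ (k + 1) := by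
      rw [mul_sum]
      refine sum_congr rfl fun k _ => ?_
      rw [ha, hchoose]
      ring
    have hprod : ∏ j ∈ range m, (1 + t * u ^ (j + 1)) = ∑ k ∈ range (m + 1), a k := by
      rw [← ih]
      exact prod_congr rfl fun j _ => by ring
    rw [prod_range_succ', sum_range_succ', hprod]
    simp only [qBinom_succ_succ, mul_add, add_mul, sum_add_distrib]
    rw [← hhigh, hlow]
    simp only [mul_one, pow_zero, Nat.choose_zero_succ, qBinom_zero_right]
    ring

end QBinomial

lemma two_mul_choose_two_add_self (k : ℕ) : 2 * k.choose 2 + k = k ^ 2 := by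
  induction k with
  | zero => rfl
  | succ k ih => rw [Nat.choose_succ_succ, Nat.choose_one_right]; linear_combination ih

lemma sum_range_two_mul_add_one (N : ℕ) : ∑ i ∈ range N, (2 * i + 1) = N ^ 2 := by
  induction N with
  | zero => rfl
  | succ N ih => rw [sum_range_succ, ih]; ring

section Theta

variable {K : Type*} [Field K]

def thetaTerm (Q x : K) (n : ℤ) : K := (-1) ^ n * Q ^ (n ^ 2) * x ^ n

lemma thetaTerm_eq_mul_neg_zpow (Q x : K) (n : ℤ) : thetaTerm Q x n = Q ^ (n ^ 2) * (-x) ^ n := by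
  rw [thetaTerm, neg_eq_neg_one_mul x, mul_zpow]; ring

lemma thetaTerm_neg (Q x : K) (n : ℤ) : thetaTerm Q x (-n) = thetaTerm Q x⁻¹ n := by
  simp only [thetaTerm, neg_sq, zpow_neg, ← inv_zpow, inv_neg, inv_one]

lemma pow_choose_two_mul_pow_eq_thetaTerm {Q x : K} (hQ : Q ≠ 0) (hx : x ≠ 0) (N k : ℕ) :
    (Q ^ 2) ^ k.choose 2 * (-(x * Q ^ (1 - 2 * N : ℤ))) ^ k =
      (-x) ^ N * (Q ^ (N ^ 2))⁻¹ * thetaTerm Q x (k - N) := by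
  have hexp : (2 * k.choose 2 : ℤ) + (1 - 2 * N) * k = ((k : ℤ) - N) ^ 2 - (N : ℤ) ^ 2 := by
    have := congrArg (Nat.cast : ℕ → ℤ) (two_mul_choose_two_add_self k)
    push_cast at this
    linear_combination this
  have hx' : -x ≠ 0 := neg_ne_zero.2 hx
  calc (Q ^ 2) ^ k.choose 2 * (-(x * Q ^ (1 - 2 * N : ℤ))) ^ k
      = (-x) ^ (k : ℤ) * Q ^ ((2 * k.choose 2 : ℤ) + (1 - 2 * N) * k) := by
        rw [zpow_add₀ hQ, zpow_mul, zpow_mul, ← neg_mul, mul_pow]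
        simp only [zpow_natCast, zpow_ofNat]
        ring
    _ = (-x) ^ (N : ℤ) * (-x) ^ ((k : ℤ) - N) * (Q ^ ((N : ℤ) ^ 2))⁻¹ *
          Q ^ (((k : ℤ) - N) ^ 2) := by
        rw [hexp, zpow_sub₀ hQ, ← zpow_add₀ hx', add_sub_cancel]
        ring
    _ = (-x) ^ N * (Q ^ (N ^ 2))⁻¹ * thetaTerm Q x (k - N) := by
        rw [thetaTerm_eq_mul_neg_zpow]
        norm_cast
        ring

lemma prod_range_two_mul_one_add_mul_pow {Q x : K} (hQ : Q ≠ 0) (hx : x ≠ 0) (N : ℕ) :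
    ∏ j ∈ range (2 * N), (1 + -(x * Q ^ (1 - 2 * N : ℤ)) * (Q ^ 2) ^ j) =
      (-x) ^ N * (Q ^ (N ^ 2))⁻¹ *
        ∏ i ∈ range N, ((1 - x * Q ^ (2 * i + 1)) * (1 - x⁻¹ * Q ^ (2 * i + 1))) := by
  have hupper (i : ℕ) : 1 + -(x * Q ^ (1 - 2 * N : ℤ)) * (Q ^ 2) ^ (N + i) =
      1 - x * Q ^ (2 * i + 1) := by
    have : Q ^ (1 - 2 * N : ℤ) * (Q ^ 2) ^ (N + i) = Q ^ (2 * i + 1) := by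
      rw [← pow_mul, ← zpow_natCast, ← zpow_natCast, ← zpow_add₀ hQ]
      congr 1
      push_cast
      ring
    rw [neg_mul, mul_assoc, this, ← sub_eq_add_neg]
  have hlower (i : ℕ) (hi : i < N) : 1 + -(x * Q ^ (1 - 2 * N : ℤ)) * (Q ^ 2) ^ (N - 1 - i) =
      -x * (Q ^ (2 * i + 1))⁻¹ * (1 - x⁻¹ * Q ^ (2 * i + 1)) := by
    have : Q ^ (1 - 2 * N : ℤ) * (Q ^ 2) ^ (N - 1 - i) = (Q ^ (2 * i + 1))⁻¹ := by
      rw [← pow_mul, ← zpow_natCast, ← zpow_natCast, ← zpow_neg, ← zpow_add₀ hQ]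
      congr 1
      push_cast [Nat.sub_sub, Nat.cast_sub (show 1 + i ≤ N by omega)]
      ring
    have hQi : Q ^ (2 * i + 1) ≠ 0 := pow_ne_zero _ hQ
    rw [neg_mul, mul_assoc, this]
    field_simp
    ring
  have hfirst : ∏ j ∈ range N, (1 + -(x * Q ^ (1 - 2 * N : ℤ)) * (Q ^ 2) ^ j) =
      (-x) ^ N * (Q ^ (N ^ 2))⁻¹ * ∏ i ∈ range N, (1 - x⁻¹ * Q ^ (2 * i + 1)) := by
    rw [← prod_range_reflect, prod_congr rfl fun i hi => hlower i (mem_range.1 hi),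
      prod_mul_distrib, prod_mul_distrib, prod_const, card_range, prod_inv_distrib,
      prod_pow_eq_pow_sum, sum_range_two_mul_add_one]
  rw [two_mul, prod_range_add, hfirst, prod_congr rfl fun i _ => hupper i, prod_mul_distrib]
  ring

theorem prod_range_eq_sum_qBinom_mul_thetaTerm {Q x : K} (hQ : Q ≠ 0) (hx : x ≠ 0) (N : ℕ) :
    ∏ i ∈ range N, ((1 - x * Q ^ (2 * i + 1)) * (1 - x⁻¹ * Q ^ (2 * i + 1))) =
      ∑ k ∈ range (2 * N + 1), qBinom (Q ^ 2) (2 * N) k * thetaTerm Q x (k - N) := by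
  have h := prod_one_add_mul_pow_eq_sum_qBinom (Q ^ 2) (-(x * Q ^ (1 - 2 * N : ℤ))) (2 * N)
  rw [prod_range_two_mul_one_add_mul_pow hQ hx] at h
  refine mul_left_cancel₀ (mul_ne_zero (pow_ne_zero _ (neg_ne_zero.2 hx))
    (inv_ne_zero (pow_ne_zero _ hQ))) (h.trans ?_)
  rw [mul_sum]
  refine sum_congr rfl fun k _ => ?_
  rw [mul_right_comm, pow_choose_two_mul_pow_eq_thetaTerm hQ hx]
  ring

end Theta

section Real

variable {u : ℝ}

lemma qBinom_nonneg (hu : 0 ≤ u) (m k : ℕ) : 0 ≤ qBinom u m k := by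
  induction m generalizing k with
  | zero => cases k <;> simp [qBinom]
  | succ m ih =>
    cases k with
    | zero => simp
    | succ k => rw [qBinom_succ_succ]; have := ih k; have := ih (k + 1); positivity

lemma qPochhammer_pos (hu0 : 0 ≤ u) (hu1 : u < 1) (m : ℕ) : 0 < qPochhammer u m :=
  prod_pos fun j _ => sub_pos.2 (pow_lt_one₀ hu0 hu1 j.succ_ne_zero)

lemma qPochhammer_antitone (hu0 : 0 ≤ u) (hu1 : u < 1) : Antitone (qPochhammer u) :=
  antitone_nat_of_succ_le fun m => by
    rw [qPochhammer_succ]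
    exact mul_le_of_le_one_right (qPochhammer_pos hu0 hu1 m).le
      (sub_le_self _ (pow_nonneg hu0 _))

lemma multipliable_one_sub_of_summable {ι : Type*} {f : ι → ℝ} (hf : Summable f) :
    Multipliable fun i => 1 - f i := by
  simpa only [sub_eq_add_neg] using Real.multipliable_one_add_of_summable hf.neg

lemma summable_pow_succ (hu0 : 0 ≤ u) (hu1 : u < 1) : Summable fun j : ℕ => u ^ (j + 1) := by
  simpa only [pow_succ'] using (summable_geometric_of_lt_one hu0 hu1).mul_left u

lemma tendsto_qPochhammer (hu0 : 0 ≤ u) (hu1 : u < 1) :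
    Tendsto (qPochhammer u) atTop (𝓝 (∏' j : ℕ, (1 - u ^ (j + 1)))) :=
  (multipliable_one_sub_of_summable (summable_pow_succ hu0 hu1)).tendsto_prod_tprod_nat

lemma tprod_one_sub_pow_succ_pos (hu0 : 0 ≤ u) (hu1 : u < 1) :
    0 < ∏' j : ℕ, (1 - u ^ (j + 1)) := by
  refine lt_of_le_of_ne (ge_of_tendsto' (tendsto_qPochhammer hu0 hu1)
    fun m => (qPochhammer_pos hu0 hu1 m).le) (Ne.symm ?_)
  simpa only [sub_eq_add_neg] using tprod_one_add_ne_zero_of_summable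
    (fun j => by
      rw [← sub_eq_add_neg]; exact (sub_pos.2 (pow_lt_one₀ hu0 hu1 j.succ_ne_zero)).ne')
    (summable_pow_succ hu0 hu1).neg.norm

lemma tprod_one_sub_pow_succ_mul_qBinom_le_one (hu0 : 0 ≤ u) (hu1 : u < 1) (m k : ℕ) :
    (∏' j : ℕ, (1 - u ^ (j + 1))) * qBinom u m k ≤ 1 := by
  rcases lt_or_ge m k with hmk | hkm
  · simp [qBinom_eq_zero_of_lt u hmk]
  have hanti := qPochhammer_antitone hu0 hu1
  have hpos := qPochhammer_pos hu0 hu1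
  calc (∏' j : ℕ, (1 - u ^ (j + 1))) * qBinom u m k
      ≤ qPochhammer u k * qBinom u m k :=
        mul_le_mul_of_nonneg_right (hanti.le_of_tendsto (tendsto_qPochhammer hu0 hu1) k)
          (qBinom_nonneg hu0 m k)
    _ ≤ 1 := by
        rw [← mul_le_mul_iff_left₀ (hpos (m - k)), one_mul, mul_comm (qPochhammer u k),
          qBinom_mul_qPochhammer_mul_qPochhammer u hkm]
        exact hanti (Nat.sub_le m k)

lemma tendsto_tprod_one_sub_pow_succ_mul_qBinom (hu0 : 0 ≤ u) (hu1 : u < 1) (n : ℤ) :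
    Tendsto (fun N : ℕ => (∏' j : ℕ, (1 - u ^ (j + 1))) * qBinom u (2 * N) (n + N).toNat)
      atTop (𝓝 1) := by
  set C := ∏' j : ℕ, (1 - u ^ (j + 1))
  have hC : C ≠ 0 := (tprod_one_sub_pow_succ_pos hu0 hu1).ne'
  have hP := tendsto_qPochhammer hu0 hu1
  have hlim : Tendsto (fun N : ℕ => C * (qPochhammer u (2 * N) /
      (qPochhammer u (n + N).toNat * qPochhammer u (N - n).toNat))) atTop
      (𝓝 (C * (C / (C * C)))) :=
    tendsto_const_nhds.mul <| (hP.comp (tendsto_id.const_mul_atTop' two_pos)).div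
      ((hP.comp (tendsto_atTop_atTop.2 fun b => ⟨b + n.natAbs, fun N hN => by omega⟩)).mul
        (hP.comp (tendsto_atTop_atTop.2 fun b => ⟨b + n.natAbs, fun N hN => by omega⟩)))
      (mul_ne_zero hC hC)
  rw [show C * (C / (C * C)) = 1 by field_simp] at hlim
  refine hlim.congr' ?_
  filter_upwards [eventually_ge_atTop n.natAbs] with N hN
  have h := qBinom_mul_qPochhammer_mul_qPochhammer u (show (n + N).toNat ≤ 2 * N by omega)
  rw [show 2 * N - (n + N).toNat = (N - n).toNat by omega] at h
  rw [← h, mul_assoc (qBinom _ _ _), mul_div_cancel_right₀ _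
    (mul_ne_zero (qPochhammer_pos hu0 hu1 _).ne' (qPochhammer_pos hu0 hu1 _).ne')]

lemma summable_pow_sq_mul_pow {Q : ℝ} (hQ0 : 0 ≤ Q) (hQ1 : Q < 1) (y : ℝ) :
    Summable fun n : ℕ => Q ^ (n ^ 2) * y ^ n := by
  have hsmall : ∀ᶠ n : ℕ in atTop, |Q ^ n * y| ≤ 1 / 2 := by
    have := (tendsto_pow_atTop_nhds_zero_of_lt_one hQ0 hQ1).mul_const y
    rw [zero_mul] at this
    exact (this.abs.eventually (ge_mem_nhds (by norm_num : |(0 : ℝ)| < 1 / 2)))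
  refine .of_norm_bounded_eventually_nat (summable_geometric_two) ?_
  filter_upwards [hsmall] with n hn
  rw [sq, pow_mul, ← mul_pow, Real.norm_eq_abs, abs_pow]
  exact pow_le_pow_left₀ (abs_nonneg _) hn n

lemma abs_thetaTerm_natCast {Q : ℝ} (hQ : 0 ≤ Q) (x : ℝ) (n : ℕ) :
    |thetaTerm Q x n| = Q ^ (n ^ 2) * |x| ^ n := by
  rw [thetaTerm, ← Nat.cast_pow]
  simp only [zpow_natCast, abs_mul, abs_pow, abs_neg, abs_one, one_pow, one_mul,
    abs_of_nonneg hQ]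

lemma summable_abs_thetaTerm {Q : ℝ} (hQ0 : 0 ≤ Q) (hQ1 : Q < 1) (x : ℝ) :
    Summable fun n : ℤ => |thetaTerm Q x n| := by
  refine .of_nat_of_neg ?_ ?_
  · simpa only [abs_thetaTerm_natCast hQ0] using summable_pow_sq_mul_pow hQ0 hQ1 |x|
  · simpa only [thetaTerm_neg, abs_thetaTerm_natCast hQ0] using
      summable_pow_sq_mul_pow hQ0 hQ1 |x⁻¹|

-- The cut-off is needed because `Int.toNat` sends every `n < -N` to `0`.
lemma tsum_ite_qBinom_mul_thetaTerm {Q x : ℝ} (hQ : Q ≠ 0) (hx : x ≠ 0) (c : ℝ) (N : ℕ) :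
    ∑' n : ℤ, (if -(N : ℤ) ≤ n then
        c * qBinom (Q ^ 2) (2 * N) (n + N).toNat * thetaTerm Q x n else 0) =
      c * ∏ i ∈ range N, ((1 - x * Q ^ (2 * i + 1)) * (1 - x⁻¹ * Q ^ (2 * i + 1))) := by
  have hshift : Function.Injective fun k : ℕ => (k : ℤ) - N := fun k l h => by simpa using h
  rw [prod_range_eq_sum_qBinom_mul_thetaTerm hQ hx, mul_sum, ← hshift.tsum_eq]
  · rw [tsum_eq_sum (s := range (2 * N + 1))]
    · refine sum_congr rfl fun k _ => ?_
      simp [mul_assoc]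
    · intro k hk
      simp [qBinom_eq_zero_of_lt _ (show 2 * N < k by simpa using hk)]
  · intro n hn
    refine ⟨(n + N).toNat, ?_⟩
    have : -(N : ℤ) ≤ n := by by_contra h; exact hn (if_neg h)
    simp only
    omega

theorem tprod_mul_tprod_eq_tsum_thetaTerm {Q x : ℝ} (hQ0 : 0 < Q) (hQ1 : Q < 1) (hx : x ≠ 0) :
    (∏' i : ℕ, (1 - x * Q ^ (2 * i + 1)) * (1 - x⁻¹ * Q ^ (2 * i + 1))) *
      ∏' i : ℕ, (1 - (Q ^ 2) ^ (i + 1)) = ∑' n : ℤ, thetaTerm Q x n := by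
  have hu0 : 0 ≤ Q ^ 2 := sq_nonneg Q
  have hu1 : Q ^ 2 < 1 := pow_lt_one₀ hQ0.le hQ1 two_ne_zero
  set C := ∏' i : ℕ, (1 - (Q ^ 2) ^ (i + 1))
  set F : ℕ → ℤ → ℝ := fun N n =>
    if -(N : ℤ) ≤ n then C * qBinom (Q ^ 2) (2 * N) (n + N).toNat * thetaTerm Q x n else 0
  have hpointwise (n : ℤ) : Tendsto (F · n) atTop (𝓝 (thetaTerm Q x n)) := by
    have := (tendsto_tprod_one_sub_pow_succ_mul_qBinom hu0 hu1 n).mul_const (thetaTerm Q x n)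
    rw [one_mul] at this
    refine this.congr' ?_
    filter_upwards [eventually_ge_atTop n.natAbs] with N hN
    exact (if_pos (by omega)).symm
  have hdominated (N : ℕ) (n : ℤ) : ‖F N n‖ ≤ |thetaTerm Q x n| := by
    simp only [F]
    split_ifs
    · rw [Real.norm_eq_abs, abs_mul, abs_of_nonneg (mul_nonneg
        (tprod_one_sub_pow_succ_pos hu0 hu1).le (qBinom_nonneg hu0 _ _))]
      exact mul_le_of_le_one_left (abs_nonneg _)
        (tprod_one_sub_pow_succ_mul_qBinom_le_one hu0 hu1 _ _)
    · simp
  have hseries := tendsto_tsum_of_dominated_convergence (summable_abs_thetaTerm hQ0.le hQ1 x)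
    hpointwise (.of_forall hdominated)
  have hproduct : Tendsto (fun N => C * ∏ i ∈ range N,
      ((1 - x * Q ^ (2 * i + 1)) * (1 - x⁻¹ * Q ^ (2 * i + 1)))) atTop
      (𝓝 (C * ∏' i : ℕ, (1 - x * Q ^ (2 * i + 1)) * (1 - x⁻¹ * Q ^ (2 * i + 1)))) := by
    have hodd (c : ℝ) : Summable fun i : ℕ => c * Q ^ (2 * i + 1) := by
      refine ((summable_geometric_of_lt_one hu0 hu1).mul_left (c * Q)).congr fun i => ?_
      ring
    exact ((multipliable_one_sub_of_summable (hodd x)).mul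
      (multipliable_one_sub_of_summable (hodd x⁻¹))).tendsto_prod_tprod_nat.const_mul C
  simp only [F, tsum_ite_qBinom_mul_thetaTerm hQ0.ne' hx] at hseries
  rw [mul_comm]
  exact tendsto_nhds_unique hproduct hseries

end Real

/-- For real `0 < a < p` and `0 < q < 1`,
`[a, p; q] · ∏_{n ≥ 1} (1 - q^{pn}) = ∑_{n ∈ ℤ} (-1)^n q^{(p n² + (p - 2a) n)/2}`,
the bilateral theta series converging absolutely (real powers of `q`). -/
theorem stmt4 (a p : ℝ) (ha : 0 < a) (hap : a < p)
    (q : ℝ) (hq0 : 0 < q) (hq1 : q < 1) :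
    Summable (fun n : ℤ =>
      |(-1 : ℝ) ^ n * q ^ ((p * (n : ℝ) ^ 2 + (p - 2 * a) * (n : ℝ)) / 2)|) ∧
    (∏' n : ℕ, (1 - q ^ (p * (n : ℝ) + a)) * (1 - q ^ (p * (n : ℝ) + p - a))) *
      (∏' n : ℕ, (1 - q ^ (p * ((n : ℝ) + 1)))) =
    ∑' n : ℤ, (-1 : ℝ) ^ n * q ^ ((p * (n : ℝ) ^ 2 + (p - 2 * a) * (n : ℝ)) / 2) := by
  set Q := q ^ (p / 2)
  set x := q ^ ((p - 2 * a) / 2)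
  have hQ0 : 0 < Q := Real.rpow_pos_of_pos hq0 _
  have hQ1 : Q < 1 := Real.rpow_lt_one hq0.le hq1 (by linarith)
  have hx : x ≠ 0 := (Real.rpow_pos_of_pos hq0 _).ne'
  have hQpow (n : ℕ) : Q ^ n = q ^ (p / 2 * n) := (Real.rpow_mul_natCast hq0.le _ n).symm
  have hθ (n : ℤ) : thetaTerm Q x n = (-1) ^ n * q ^ ((p * n ^ 2 + (p - 2 * a) * n) / 2) := by
    rw [thetaTerm, mul_assoc, ← Real.rpow_mul_intCast hq0.le, ← Real.rpow_mul_intCast hq0.le,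
      ← Real.rpow_add hq0]
    congr 2
    push_cast
    ring
  have hpair (n : ℕ) : (1 - x * Q ^ (2 * n + 1)) * (1 - x⁻¹ * Q ^ (2 * n + 1)) =
      (1 - q ^ (p * n + a)) * (1 - q ^ (p * n + p - a)) := by
    have hplus : x * Q ^ (2 * n + 1) = q ^ (p * n + p - a) := by
      rw [hQpow, ← Real.rpow_add hq0]; push_cast; ring_nf
    have hminus : x⁻¹ * Q ^ (2 * n + 1) = q ^ (p * n + a) := by
      rw [hQpow, ← Real.rpow_neg hq0.le, ← Real.rpow_add hq0]; push_cast; ring_nf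
    rw [hplus, hminus, mul_comm]
  have hEuler (n : ℕ) : 1 - (Q ^ 2) ^ (n + 1) = 1 - q ^ (p * (n + 1)) := by
    rw [← pow_mul, hQpow]
    congr 2
    push_cast
    ring
  refine ⟨by simpa only [hθ] using summable_abs_thetaTerm hQ0.le hQ1 x, ?_⟩
  simpa only [hθ, hpair, hEuler] using tprod_mul_tprod_eq_tsum_thetaTerm hQ0 hQ1 hx
end

section
/- Let a and p be real numbers with 0 < a < p and let q be real with 0 < q < 1. Then ( ∏_{n=0}^∞ (1 − q^{pn+a})(1 − q^{pn+p−a}) ) · ( ∏_{n=1}^∞ (1 − q^{pn}) ) = ∑_{n=0}^∞ (−1)ⁿ q^{p n(n+1)/2 − a n} − q^{a} · ∑_{n=0}^∞ (−1)ⁿ q^{p n(n+1)/2 + a n}, where q raised to real exponents is the real power and both series converge absolutely. -/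
/-!
With `Q = q ^ p` and `x = q ^ a` this is Jacobi's triple product. Substituting `z = -x / Q ^ N`
into the `q`-binomial theorem for `∏_{j < 2N} (1 + z Q ^ j)` gives a finite triple product whose
right-hand side carries the Gaussian binomials `[2N, N - n]` and `[2N, N + 1 + n]`. These equal
`(Q; Q)_{2N} / ((Q; Q)_k (Q; Q)_{2N-k})`, so they are bounded by `(Q; Q)_∞⁻²` and tend to
`(Q; Q)_∞⁻¹`; Tannery's theorem then passes to the limit `N → ∞`.
-/

open Finset Filter Topology

namespace QSeries

section Semiring

variable {R : Type*} [CommSemiring R] (Q : R)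

def gaussBinom : ℕ → ℕ → R
  | _, 0 => 1
  | 0, _ + 1 => 0
  | n + 1, k + 1 => gaussBinom n (k + 1) + Q ^ (n - k) * gaussBinom n k

@[simp] lemma gaussBinom_zero_right (n : ℕ) : gaussBinom Q n 0 = 1 := by cases n <;> rfl

lemma gaussBinom_succ_succ (n k : ℕ) :
    gaussBinom Q (n + 1) (k + 1) = gaussBinom Q n (k + 1) + Q ^ (n - k) * gaussBinom Q n k :=
  rfl

lemma gaussBinom_eq_zero_of_lt {n k : ℕ} (h : n < k) : gaussBinom Q n k = 0 := by
  induction n generalizing k with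
  | zero => obtain ⟨k, rfl⟩ := Nat.exists_eq_add_of_lt h; rfl
  | succ n ih =>
    obtain ⟨k, rfl⟩ := Nat.exists_eq_succ_of_ne_zero (by omega : k ≠ 0)
    rw [gaussBinom_succ_succ, ih (by omega), ih (by omega), mul_zero, add_zero]

@[simp] lemma gaussBinom_self (n : ℕ) : gaussBinom Q n n = 1 := by
  induction n with
  | zero => rfl
  | succ n ih => rw [gaussBinom_succ_succ, gaussBinom_eq_zero_of_lt Q n.lt_succ_self, ih]; simp

lemma choose_two_succ (k : ℕ) : (k + 1).choose 2 = k.choose 2 + k := by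
  rw [Nat.choose_succ_succ', Nat.choose_one_right, add_comm]

lemma prod_range_pow_succ {M : Type*} [CommMonoid M] (a : M) (N : ℕ) :
    ∏ j ∈ range N, a ^ (j + 1) = a ^ (N + 1).choose 2 := by
  induction N with
  | zero => simp
  | succ N ih => rw [prod_range_succ, ih, choose_two_succ (N + 1), ← pow_add]

theorem prod_one_add_mul_pow_eq_sum_gaussBinom (z : R) (n : ℕ) :
    ∏ j ∈ range n, (1 + z * Q ^ j) =
      ∑ k ∈ range (n + 1), gaussBinom Q n k * Q ^ k.choose 2 * z ^ k := by
  induction n with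
  | zero => simp
  | succ n ih =>
    set a : ℕ → R := fun k => gaussBinom Q n k * Q ^ k.choose 2 * z ^ k
    have hshift : ∑ k ∈ range (n + 1), a (k + 1) + 1 = ∑ k ∈ range (n + 1), a k := by
      calc ∑ k ∈ range (n + 1), a (k + 1) + 1 = ∑ k ∈ range (n + 1 + 1), a k := by
            rw [sum_range_succ' a (n + 1)]; simp [a]
        _ = ∑ k ∈ range (n + 1), a k := by
            rw [sum_range_succ]; simp [a, gaussBinom_eq_zero_of_lt Q n.lt_succ_self]
    have hstep : ∀ k ∈ range (n + 1), gaussBinom Q (n + 1) (k + 1) * Q ^ (k + 1).choose 2 *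
        z ^ (k + 1) = a (k + 1) + a k * (z * Q ^ n) := by
      intro k hk
      have hexp : Q ^ (n - k) * Q ^ (k + 1).choose 2 = Q ^ k.choose 2 * Q ^ n := by
        rw [← pow_add, ← pow_add, choose_two_succ]
        have := mem_range.1 hk
        congr 1
        omega
      calc _ = a (k + 1) +
            gaussBinom Q n k * (Q ^ (n - k) * Q ^ (k + 1).choose 2) * z ^ (k + 1) := by
            rw [gaussBinom_succ_succ]; ring
        _ = a (k + 1) + a k * (z * Q ^ n) := by rw [hexp]; ring
    rw [prod_range_succ, ih, sum_range_succ' _ (n + 1), sum_congr rfl hstep, sum_add_distrib,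
      ← sum_mul, ← hshift]
    simp only [gaussBinom_zero_right, Nat.choose_zero_succ, pow_zero]
    ring

end Semiring

section Ring

variable {R : Type*} [CommRing R] (Q : R)

/-- `(Q; Q)_m`. -/
def qPochhammer (m : ℕ) : R := ∏ i ∈ range m, (1 - Q ^ (i + 1))

@[simp] lemma qPochhammer_zero : qPochhammer Q 0 = 1 := prod_range_zero _

lemma qPochhammer_succ (m : ℕ) : qPochhammer Q (m + 1) = qPochhammer Q m * (1 - Q ^ (m + 1)) :=
  prod_range_succ _ _

theorem gaussBinom_mul_qPochhammer_mul {n k : ℕ} (h : k ≤ n) :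
    gaussBinom Q n k * (qPochhammer Q k * qPochhammer Q (n - k)) = qPochhammer Q n := by
  induction n generalizing k with
  | zero => obtain rfl := Nat.le_zero.1 h; simp
  | succ n ih =>
    obtain _ | k := k
    · simp
    obtain rfl | hk := (Nat.le_of_succ_le_succ h).eq_or_lt
    · rw [gaussBinom_self, Nat.sub_self, qPochhammer_zero, one_mul, mul_one]
    obtain ⟨m, rfl⟩ := Nat.exists_eq_add_of_lt hk
    have ih₁ := ih (k := k + 1) (by omega)
    have ih₀ := ih (k := k) (by omega)
    simp only [show k + m + 1 - (k + 1) = m by omega, show k + m + 1 - k = m + 1 by omega,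
      show k + m + 1 + 1 - (k + 1) = m + 1 by omega, qPochhammer_succ] at ih₁ ih₀ ⊢
    rw [gaussBinom_succ_succ, show k + m + 1 - k = m + 1 by omega]
    linear_combination (1 - Q ^ (m + 1)) * ih₁ + Q ^ (m + 1) * (1 - Q ^ (k + 1)) * ih₀

def jacobiTerm (y : R) (n : ℕ) : R := (-1) ^ n * Q ^ (n + 1).choose 2 * y ^ n

lemma jacobiTerm_succ (y : R) (n : ℕ) :
    jacobiTerm Q y (n + 1) = -(Q ^ (n + 1) * y) * jacobiTerm Q y n := by
  rw [jacobiTerm, jacobiTerm, choose_two_succ (n + 1)]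
  ring

end Ring

section Field

variable {K : Type*} [Field K] {Q x : K}

/- The two lemmas below evaluate the summand `Q ^ k.choose 2 * z ^ k` of the `q`-binomial theorem
at `z = -x / Q ^ N` for `k = N - n` and `k = N + 1 + n`. -/
lemma pow_choose_two_mul_neg_div_pow_pow_eq_jacobiTerm_inv (hQ : Q ≠ 0) (hx : x ≠ 0) (m n : ℕ) :
    Q ^ m.choose 2 * (-x / Q ^ (n + m)) ^ m =
      (-x) ^ (n + m) / Q ^ (n + m + 1).choose 2 * jacobiTerm Q x⁻¹ n := by
  have hexp : m.choose 2 + (n + m + 1).choose 2 = (n + m) * m + (n + 1).choose 2 := by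
    qify; push_cast [Nat.cast_choose_two]; ring
  have hQ' : Q ^ m.choose 2 * Q ^ (n + m + 1).choose 2 =
      (Q ^ (n + m)) ^ m * Q ^ (n + 1).choose 2 := by
    rw [← pow_add, ← pow_mul, ← pow_add, hexp]
  have hsign : ((-1 : K) ^ n) ^ 2 = 1 := by rw [← pow_mul, mul_comm, pow_mul, neg_one_sq, one_pow]
  simp only [jacobiTerm, div_pow, neg_pow x, pow_add, inv_pow]
  field_simp
  linear_combination hQ' - (Q ^ (n + m)) ^ m * Q ^ (n + 1).choose 2 * hsign

lemma pow_choose_two_mul_neg_div_pow_pow_eq_neg_mul_jacobiTerm (hQ : Q ≠ 0) (N n : ℕ) :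
    Q ^ (N + 1 + n).choose 2 * (-x / Q ^ N) ^ (N + 1 + n) =
      -((-x) ^ N / Q ^ (N + 1).choose 2 * (x * jacobiTerm Q x n)) := by
  have hexp : (N + 1 + n).choose 2 + (N + 1).choose 2 = N * (N + 1 + n) + (n + 1).choose 2 := by
    qify; push_cast [Nat.cast_choose_two]; ring
  have hQ' : Q ^ (N + 1 + n).choose 2 * Q ^ (N + 1).choose 2 =
      (Q ^ N) ^ (N + 1 + n) * Q ^ (n + 1).choose 2 := by
    rw [← pow_add, ← pow_mul, ← pow_add, hexp]
  simp only [jacobiTerm, div_pow, neg_pow x]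
  field_simp
  linear_combination (-(x * x ^ N * x ^ n * (-1) ^ N * (-1) ^ n)) * hQ'

theorem jacobi_triple_product_finite (hQ : Q ≠ 0) (hx : x ≠ 0) (N : ℕ) :
    ∏ j ∈ range N, (1 - x * Q ^ j) * (1 - Q ^ (j + 1) / x) =
      ∑ n ∈ range (N + 1), gaussBinom Q (2 * N) (N - n) * jacobiTerm Q x⁻¹ n -
        x * ∑ n ∈ range N, gaussBinom Q (2 * N) (N + 1 + n) * jacobiTerm Q x n := by
  set C : K := (-x) ^ N / Q ^ (N + 1).choose 2
  have hC : C ≠ 0 := div_ne_zero (pow_ne_zero _ (neg_ne_zero.2 hx)) (pow_ne_zero _ hQ)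
  have hprod : ∏ j ∈ range (2 * N), (1 + (-x / Q ^ N) * Q ^ j) =
      C * ∏ j ∈ range N, (1 - x * Q ^ j) * (1 - Q ^ (j + 1) / x) := by
    rw [two_mul, prod_range_add, ← prod_range_reflect, prod_mul_distrib]
    have hlow : ∀ j ∈ range N, 1 + -x / Q ^ N * Q ^ (N - 1 - j) =
        -x / Q ^ (j + 1) * (1 - Q ^ (j + 1) / x) := by
      intro j hj
      have hN : Q ^ N = Q ^ (N - 1 - j) * Q ^ (j + 1) := by
        rw [← pow_add]; congr 1; have := mem_range.1 hj; omega
      rw [hN]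
      field_simp
      ring
    have hhigh : ∀ j ∈ range N, 1 + -x / Q ^ N * Q ^ (N + j) = 1 - x * Q ^ j := by
      intro j _
      rw [pow_add]
      field_simp
      ring
    rw [prod_congr rfl hlow, prod_congr rfl hhigh, prod_mul_distrib, prod_div_distrib, prod_const,
      card_range, prod_range_pow_succ]
    ring
  have hsum :
      ∑ k ∈ range (2 * N + 1), gaussBinom Q (2 * N) k * Q ^ k.choose 2 * (-x / Q ^ N) ^ k =
      C * (∑ n ∈ range (N + 1), gaussBinom Q (2 * N) (N - n) * jacobiTerm Q x⁻¹ n -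
        x * ∑ n ∈ range N, gaussBinom Q (2 * N) (N + 1 + n) * jacobiTerm Q x n) := by
    rw [show 2 * N + 1 = N + 1 + N by ring, sum_range_add, ← sum_range_reflect, mul_sub,
      sub_eq_add_neg, mul_sum, mul_sum, mul_sum, ← sum_neg_distrib]
    congr 1 <;> refine sum_congr rfl fun n hn => ?_
    · obtain ⟨m, rfl⟩ := Nat.exists_eq_add_of_le (Nat.lt_succ_iff.1 (mem_range.1 hn))
      rw [show n + m + 1 - 1 - n = m by omega, Nat.add_sub_cancel_left, mul_assoc,
        pow_choose_two_mul_neg_div_pow_pow_eq_jacobiTerm_inv hQ hx m n]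
      ring
    · rw [mul_assoc, pow_choose_two_mul_neg_div_pow_pow_eq_neg_mul_jacobiTerm hQ]
      ring
  exact mul_left_cancel₀ hC (by rw [← hprod, ← hsum, prod_one_add_mul_pow_eq_sum_gaussBinom])

end Field

lemma tendsto_sum_range_mul_of_tendsto {c : ℕ → ℕ → ℝ} {f : ℕ → ℝ} {m : ℕ → ℕ} {B L : ℝ}
    (hm : Tendsto m atTop atTop) (hf : Summable fun n => |f n|) (hB : ∀ N n, |c N n| ≤ B)
    (hc : ∀ n, Tendsto (c · n) atTop (𝓝 L)) :
    Tendsto (fun N => ∑ n ∈ range (m N), c N n * f n) atTop (𝓝 (L * ∑' n, f n)) := by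
  have hB0 : 0 ≤ B := (abs_nonneg _).trans (hB 0 0)
  have key := tendsto_tsum_of_dominated_convergence
    (f := fun N n => if n < m N then c N n * f n else 0) (hf.mul_left B)
    (fun n => ((hc n).mul_const (f n)).congr' <| by
      filter_upwards [hm.eventually_gt_atTop n] with N hN using (if_pos hN).symm)
    (.of_forall fun N n => by
      split_ifs
      · rw [Real.norm_eq_abs, abs_mul]
        exact mul_le_mul_of_nonneg_right (hB N n) (abs_nonneg _)
      · rw [norm_zero]; positivity)
  rw [tsum_mul_left] at key
  refine key.congr fun N => ?_
  rw [tsum_eq_sum (s := range (m N)) fun n hn => if_neg (by simpa using hn)]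
  exact sum_congr rfl fun n hn => if_pos (mem_range.1 hn)

section Real

variable {Q : ℝ}

lemma summable_abs_jacobiTerm (hQ : |Q| < 1) (y : ℝ) : Summable fun n => |jacobiTerm Q y n| := by
  refine Summable.abs <| summable_of_ratio_norm_eventually_le (r := 1 / 2) (by norm_num) ?_
  have hsmall : Tendsto (fun n => |Q| ^ (n + 1) * |y|) atTop (𝓝 0) := by
    simpa using ((tendsto_pow_atTop_nhds_zero_of_lt_one (abs_nonneg Q) hQ).comp
      (tendsto_add_atTop_nat 1)).mul_const |y|
  filter_upwards [hsmall.eventually_le_const (by norm_num : (0 : ℝ) < 1 / 2)] with n hn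
  rw [jacobiTerm_succ, norm_mul, norm_neg, norm_mul, norm_pow, Real.norm_eq_abs, Real.norm_eq_abs]
  exact mul_le_mul_of_nonneg_right hn (norm_nonneg _)

lemma multipliable_one_sub_mul_pow (hQ : |Q| < 1) (c : ℝ) :
    Multipliable fun n => 1 - c * Q ^ n := by
  simp_rw [sub_eq_add_neg]
  apply multipliable_one_add_of_summable
  simpa [abs_mul] using (summable_geometric_of_lt_one (abs_nonneg Q) hQ).mul_left |c|

variable (hQ0 : 0 < Q) (hQ1 : Q < 1)
include hQ0 hQ1

lemma qPochhammer_pos (m : ℕ) : 0 < qPochhammer Q m :=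
  prod_pos fun i _ => sub_pos.2 (pow_lt_one₀ hQ0.le hQ1 i.succ_ne_zero)

lemma qPochhammer_antitone : Antitone (qPochhammer Q) :=
  antitone_nat_of_succ_le fun m => by
    rw [qPochhammer_succ]
    exact mul_le_of_le_one_right (qPochhammer_pos hQ0 hQ1 m).le (by linarith [pow_pos hQ0 (m + 1)])

lemma tendsto_qPochhammer : Tendsto (qPochhammer Q) atTop (𝓝 (∏' n, (1 - Q ^ (n + 1)))) :=
  ((multipliable_one_sub_mul_pow (by rwa [abs_of_pos hQ0]) Q).congr fun n => by
    rw [pow_succ']).hasProd.tendsto_prod_nat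

lemma tprod_one_sub_pow_succ_pos : 0 < ∏' n, (1 - Q ^ (n + 1)) := by
  refine lt_of_le_of_ne (tprod_nonneg fun n => ?_) (Ne.symm ?_)
  · exact sub_nonneg.2 (pow_le_one₀ hQ0.le hQ1.le)
  · simp_rw [sub_eq_add_neg]
    refine tprod_one_add_ne_zero_of_summable (fun n => ?_) ?_
    · exact (sub_pos.2 (pow_lt_one₀ hQ0.le hQ1 n.succ_ne_zero)).ne'
    · simpa [abs_of_pos hQ0] using
        (summable_nat_add_iff 1).2 (summable_geometric_of_lt_one hQ0.le hQ1)

lemma tprod_le_qPochhammer (m : ℕ) : ∏' n, (1 - Q ^ (n + 1)) ≤ qPochhammer Q m :=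
  (qPochhammer_antitone hQ0 hQ1).le_of_tendsto (tendsto_qPochhammer hQ0 hQ1) m

lemma gaussBinom_eq_div {n k : ℕ} (h : k ≤ n) :
    gaussBinom Q n k = qPochhammer Q n / (qPochhammer Q k * qPochhammer Q (n - k)) :=
  eq_div_of_mul_eq (mul_pos (qPochhammer_pos hQ0 hQ1 k) (qPochhammer_pos hQ0 hQ1 _)).ne'
    (gaussBinom_mul_qPochhammer_mul Q h)

lemma abs_gaussBinom_le (n k : ℕ) :
    |gaussBinom Q n k| ≤ ((∏' n, (1 - Q ^ (n + 1))) ^ 2)⁻¹ := by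
  rcases lt_or_ge n k with h | h
  · rw [gaussBinom_eq_zero_of_lt Q h, abs_zero]
    positivity
  have hP := tprod_one_sub_pow_succ_pos hQ0 hQ1
  have hE := qPochhammer_pos hQ0 hQ1
  rw [gaussBinom_eq_div hQ0 hQ1 h, abs_of_nonneg (div_nonneg (hE n).le (mul_pos (hE k) (hE _)).le),
    sq, ← one_div]
  refine div_le_div₀ zero_le_one ?_ (mul_pos hP hP) ?_
  · simpa using qPochhammer_antitone hQ0 hQ1 (Nat.zero_le n)
  · exact mul_le_mul (tprod_le_qPochhammer hQ0 hQ1 k) (tprod_le_qPochhammer hQ0 hQ1 _) hP.le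
      (hE k).le

lemma tendsto_gaussBinom {a b : ℕ → ℕ} (ha : Tendsto a atTop atTop)
    (hb : Tendsto b atTop atTop) :
    Tendsto (fun N => gaussBinom Q (a N + b N) (a N)) atTop
      (𝓝 (∏' n, (1 - Q ^ (n + 1)))⁻¹) := by
  have hE := tendsto_qPochhammer hQ0 hQ1
  have hP := tprod_one_sub_pow_succ_pos hQ0 hQ1
  have := (hE.comp (ha.atTop_add_atTop hb)).div ((hE.comp ha).mul (hE.comp hb)) (by positivity)
  rw [div_mul_cancel_left₀ hP.ne'] at this
  refine this.congr fun N => ?_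
  rw [gaussBinom_eq_div hQ0 hQ1 (Nat.le_add_right _ _), Nat.add_sub_cancel_left]
  rfl

theorem jacobi_triple_product {x : ℝ} (hx : x ≠ 0) :
    (∏' n, (1 - x * Q ^ n) * (1 - Q ^ (n + 1) / x)) * ∏' n, (1 - Q ^ (n + 1)) =
      ∑' n, jacobiTerm Q x⁻¹ n - x * ∑' n, jacobiTerm Q x n := by
  have hP := tprod_one_sub_pow_succ_pos hQ0 hQ1
  have hQ : |Q| < 1 := by rwa [abs_of_pos hQ0]
  have hlow := tendsto_sum_range_mul_of_tendsto (tendsto_add_atTop_nat 1)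
    (summable_abs_jacobiTerm hQ x⁻¹) (fun N n => abs_gaussBinom_le hQ0 hQ1 (2 * N) (N - n))
    fun n => (tendsto_gaussBinom hQ0 hQ1 (tendsto_sub_atTop_nat n)
      (tendsto_add_atTop_nat n)).congr' <| by
      filter_upwards [eventually_ge_atTop n] with N hN
      rw [show N - n + (N + n) = 2 * N by omega]
  have hhigh := tendsto_sum_range_mul_of_tendsto tendsto_id
    (summable_abs_jacobiTerm hQ x) (fun N n => abs_gaussBinom_le hQ0 hQ1 (2 * N) (N + 1 + n))
    fun n => (tendsto_gaussBinom hQ0 hQ1 (tendsto_add_atTop_nat (n + 1))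
      (tendsto_sub_atTop_nat (n + 1))).congr' <| by
      filter_upwards [eventually_ge_atTop (n + 1)] with N hN
      rw [show N + (n + 1) + (N - (n + 1)) = 2 * N by omega, show N + (n + 1) = N + 1 + n by ring]
  have hprod := ((multipliable_one_sub_mul_pow hQ x).mul
    ((multipliable_one_sub_mul_pow hQ (Q / x)).congr (g := fun n => 1 - Q ^ (n + 1) / x)
      fun n => by ring)).hasProd.tendsto_prod_nat
  have hlim := tendsto_nhds_unique hprod <| (hlow.sub (hhigh.const_mul x)).congr fun N =>
    (jacobi_triple_product_finite hQ0.ne' hx N).symm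
  rw [hlim]
  field_simp

end Real

lemma neg_one_pow_mul_rpow_eq_jacobiTerm {q : ℝ} (hq : 0 < q) (p b : ℝ) (n : ℕ) :
    (-1) ^ n * q ^ (p * n * (n + 1) / 2 + b * n) = jacobiTerm (q ^ p) (q ^ b) n := by
  rw [jacobiTerm, ← Real.rpow_mul_natCast hq.le, ← Real.rpow_mul_natCast hq.le,
    mul_assoc ((-1) ^ n), ← Real.rpow_add hq, Nat.cast_choose_two]
  push_cast
  ring_nf

end QSeries

open QSeries

/-- For real `0 < a < p` and `0 < q < 1`,
`[a, p; q] · ∏_{n ≥ 1} (1 - q^{pn})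
  = ∑_{n ≥ 0} (-1)^n q^{p n(n+1)/2 - a n} - q^a ∑_{n ≥ 0} (-1)^n q^{p n(n+1)/2 + a n}`,
both series converging absolutely (real powers of `q`). -/
theorem stmt5 (a p : ℝ) (ha : 0 < a) (hap : a < p)
    (q : ℝ) (hq0 : 0 < q) (hq1 : q < 1) :
    Summable (fun n : ℕ =>
      |(-1 : ℝ) ^ n * q ^ (p * (n : ℝ) * ((n : ℝ) + 1) / 2 - a * (n : ℝ))|) ∧
    Summable (fun n : ℕ =>
      |(-1 : ℝ) ^ n * q ^ (p * (n : ℝ) * ((n : ℝ) + 1) / 2 + a * (n : ℝ))|) ∧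
    (∏' n : ℕ, (1 - q ^ (p * (n : ℝ) + a)) * (1 - q ^ (p * (n : ℝ) + p - a))) *
      (∏' n : ℕ, (1 - q ^ (p * ((n : ℝ) + 1)))) =
    (∑' n : ℕ, (-1 : ℝ) ^ n * q ^ (p * (n : ℝ) * ((n : ℝ) + 1) / 2 - a * (n : ℝ))) -
      q ^ a * ∑' n : ℕ, (-1 : ℝ) ^ n *
        q ^ (p * (n : ℝ) * ((n : ℝ) + 1) / 2 + a * (n : ℝ)) := by
  have hQ0 : 0 < q ^ p := Real.rpow_pos_of_pos hq0 p
  have hQ1 : q ^ p < 1 := Real.rpow_lt_one hq0.le hq1 (ha.trans hap)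
  have hx : q ^ a ≠ 0 := (Real.rpow_pos_of_pos hq0 a).ne'
  have hQ : |q ^ p| < 1 := by rwa [abs_of_pos hQ0]
  have hlow (n : ℕ) :
      (-1) ^ n * q ^ (p * n * (n + 1) / 2 - a * n) = jacobiTerm (q ^ p) (q ^ a)⁻¹ n := by
    rw [sub_eq_add_neg, ← neg_mul, neg_one_pow_mul_rpow_eq_jacobiTerm hq0, Real.rpow_neg hq0.le]
  have hfactor₁ (n : ℕ) : q ^ (p * n + a) = q ^ a * (q ^ p) ^ n := by
    rw [Real.rpow_add hq0, Real.rpow_mul_natCast hq0.le, mul_comm]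
  have hfactor₂ (n : ℕ) : q ^ (p * n + p - a) = (q ^ p) ^ (n + 1) / q ^ a := by
    rw [Real.rpow_sub hq0, ← Real.rpow_mul_natCast hq0.le]
    push_cast
    ring_nf
  have hfactor₃ (n : ℕ) : q ^ (p * (n + 1)) = (q ^ p) ^ (n + 1) := by
    rw [← Real.rpow_mul_natCast hq0.le]
    push_cast
    rfl
  simp only [hlow, neg_one_pow_mul_rpow_eq_jacobiTerm hq0, hfactor₁, hfactor₂, hfactor₃]
  exact ⟨summable_abs_jacobiTerm hQ _, summable_abs_jacobiTerm hQ _,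
    jacobi_triple_product hQ0 hQ1 hx⟩
end
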